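/- arXiv:1105.5333 — 7 statements merged into one kernel-verified Lean document; each statement's English description precedes it below -/
import Mathlib

section
/- Let w, w' be mirrored ℤ-permutations both satisfying w(1) < ... < w(n) < w(n+1) and w'(1) < ... < w'(n) < w'(n+1). If {w(1), ..., w(2n)} = {w'(1), ..., w'(2n)} as sets, then w = w'. -/
private lemma stmt10_step (n : ℕ) (w : ℤ → ℤ)
    (hshift : ∀ i : ℤ, w (i + (2 * (n : ℤ) + 1)) = w i + (2 * (n : ℤ) + 1))
    (hmirror : ∀ i : ℤ, w (-i) = - w i)
    (hsort : ∀ i : ℤ, 1 ≤ i → i ≤ (n : ℤ) → w i < w (i + 1)) :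
    ∀ i : ℤ, 1 ≤ i → i ≤ 2 * (n : ℤ) - 1 → w i < w (i + 1) := by
  have hrefl : ∀ i : ℤ, w (2 * (n : ℤ) + 1 - i) = 2 * (n : ℤ) + 1 - w i := by
    intro i
    have := hshift (-i)
    rw [hmirror i] at this
    have h2 : (-i) + (2 * (n : ℤ) + 1) = 2 * (n : ℤ) + 1 - i := by ring
    rw [h2] at this
    linarith
  intro i h1 h2
  rcases le_or_gt i n with h | h
  · exact hsort i h1 h
  · -- n + 1 ≤ i ≤ 2n - 1 ; set j = 2n+1 - i - 1 ∈ [1, n-1]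
    have e1 : w i = 2 * (n : ℤ) + 1 - w (2 * (n : ℤ) + 1 - i) := by
      have := hrefl (2 * (n : ℤ) + 1 - i)
      rw [show 2 * (n : ℤ) + 1 - (2 * (n : ℤ) + 1 - i) = i by ring] at this
      linarith
    have e2 : w (i + 1) = 2 * (n : ℤ) + 1 - w (2 * (n : ℤ) - i) := by
      have := hrefl (2 * (n : ℤ) - i)
      rw [show 2 * (n : ℤ) + 1 - (2 * (n : ℤ) - i) = i + 1 by ring] at this
      linarith
    have hs : w (2 * (n : ℤ) - i) < w (2 * (n : ℤ) - i + 1) := by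
      apply hsort <;> omega
    rw [show 2 * (n : ℤ) - i + 1 = 2 * (n : ℤ) + 1 - i by ring] at hs
    omega

private lemma stmt10_mono (n : ℕ) (w : ℤ → ℤ)
    (hshift : ∀ i : ℤ, w (i + (2 * (n : ℤ) + 1)) = w i + (2 * (n : ℤ) + 1))
    (hmirror : ∀ i : ℤ, w (-i) = - w i)
    (hsort : ∀ i : ℤ, 1 ≤ i → i ≤ (n : ℤ) → w i < w (i + 1)) :
    ∀ i j : ℤ, 1 ≤ i → i < j → j ≤ 2 * (n : ℤ) → w i < w j := by
  have step := stmt10_step n w hshift hmirror hsort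
  intro i j h1 hij hj
  obtain ⟨k, hk⟩ : ∃ k : ℕ, j = i + 1 + k := ⟨(j - i - 1).toNat, by omega⟩
  subst hk
  clear hij
  induction k with
  | zero => simpa using step i h1 (by omega)
  | succ m ih =>
      have h1' : w i < w (i + 1 + m) := ih (by push_cast at hj ⊢; omega)
      have h2' : w (i + 1 + m) < w (i + 1 + m + 1) := by
        apply step <;> push_cast at hj ⊢ <;> omega
      have : (i + 1 + (m + 1 : ℕ)) = i + 1 + (m : ℤ) + 1 := by push_cast; ring
      rw [this]
      omega

/-- Two mirrored ℤ-permutations satisfying the sorting condition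
`w 1 < ⋯ < w n < w (n+1)` with the same set of base window entries are equal. -/
theorem stmt10 (n : ℕ) (hn : 0 < n) (w w' : ℤ → ℤ)
    (hbij : Function.Bijective w) (hbij' : Function.Bijective w')
    (hshift : ∀ i : ℤ, w (i + (2 * (n : ℤ) + 1)) = w i + (2 * (n : ℤ) + 1))
    (hshift' : ∀ i : ℤ, w' (i + (2 * (n : ℤ) + 1)) = w' i + (2 * (n : ℤ) + 1))
    (hmirror : ∀ i : ℤ, w (-i) = - w i)
    (hmirror' : ∀ i : ℤ, w' (-i) = - w' i)
    (hsort : ∀ i : ℤ, 1 ≤ i → i ≤ (n : ℤ) → w i < w (i + 1))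
    (hsort' : ∀ i : ℤ, 1 ≤ i → i ≤ (n : ℤ) → w' i < w' (i + 1))
    (hwin : w '' Set.Icc (1 : ℤ) (2 * (n : ℤ)) = w' '' Set.Icc (1 : ℤ) (2 * (n : ℤ))) :
    w = w' := by
  have hmono := stmt10_mono n w hshift hmirror hsort
  have hmono' := stmt10_mono n w' hshift' hmirror' hsort'
  -- Finset versions
  set s : Finset ℤ := (Finset.Icc (1 : ℤ) (2 * (n : ℤ))).image w with hs_def
  have hcoe : (s : Set ℤ) = w '' Set.Icc (1 : ℤ) (2 * (n : ℤ)) := by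
    simp [hs_def]
  have hcard : s.card = 2 * n := by
    rw [hs_def, Finset.card_image_of_injective _ hbij.injective]
    rw [Int.card_Icc]
    simp
    omega
  have hs' : (Finset.Icc (1 : ℤ) (2 * (n : ℤ))).image w' = s := by
    apply Finset.coe_injective
    simp only [Finset.coe_image, Finset.coe_Icc, hcoe]
    exact hwin.symm
  -- the two strictly monotone enumerations agree
  have hf : (fun k : Fin (2 * n) => w ((k : ℤ) + 1)) = s.orderEmbOfFin hcard := by
    apply Finset.orderEmbOfFin_unique hcard
    · intro x
      rw [hs_def]
      apply Finset.mem_image_of_mem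
      rw [Finset.mem_Icc]
      have := x.2; constructor <;> push_cast <;> omega
    · intro a b hab
      have ha : (a : ℤ) < (b : ℤ) := by exact_mod_cast hab
      have hb : (b : ℤ) < 2 * n := by exact_mod_cast b.2
      apply hmono <;> omega
  have hf' : (fun k : Fin (2 * n) => w' ((k : ℤ) + 1)) = s.orderEmbOfFin hcard := by
    apply Finset.orderEmbOfFin_unique hcard
    · intro x
      rw [← hs', ]
      apply Finset.mem_image_of_mem
      rw [Finset.mem_Icc]
      have := x.2; constructor <;> push_cast <;> omega
    · intro a b hab
      have ha : (a : ℤ) < (b : ℤ) := by exact_mod_cast hab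
      have hb : (b : ℤ) < 2 * n := by exact_mod_cast b.2
      apply hmono' <;> omega
  have heq : ∀ i : ℤ, 1 ≤ i → i ≤ 2 * (n : ℤ) → w i = w' i := by
    intro i h1 h2
    have hk : (i - 1).toNat < 2 * n := by omega
    have h2 : w (((i - 1).toNat : ℤ) + 1) = w' (((i - 1).toNat : ℤ) + 1) :=
      congrFun (hf.trans hf'.symm) ⟨(i - 1).toNat, hk⟩
    rwa [show (((i - 1).toNat : ℤ) + 1) = i by omega] at h2
  -- w 0 = 0 and w' 0 = 0
  have hw0 : w 0 = 0 := by have := hmirror 0; rw [neg_zero] at this; omega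
  have hw0' : w' 0 = 0 := by have := hmirror' 0; rw [neg_zero] at this; omega
  have heq0 : ∀ i : ℤ, 0 ≤ i → i ≤ 2 * (n : ℤ) → w i = w' i := by
    intro i h1 h2
    rcases eq_or_lt_of_le h1 with h | h
    · rw [← h, hw0, hw0']
    · exact heq i h h2
  -- periodic extension
  have hper : ∀ (v : ℤ → ℤ), (∀ i : ℤ, v (i + (2 * (n : ℤ) + 1)) = v i + (2 * (n : ℤ) + 1)) →
      ∀ (q r : ℤ), v (r + (2 * (n : ℤ) + 1) * q) = v r + (2 * (n : ℤ) + 1) * q := by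
    intro v hv q r
    induction q using Int.induction_on with
    | zero => simp
    | succ m ih =>
        have := hv (r + (2 * (n : ℤ) + 1) * m)
        rw [show r + (2 * (n : ℤ) + 1) * m + (2 * (n : ℤ) + 1)
            = r + (2 * (n : ℤ) + 1) * ((m : ℤ) + 1) by ring] at this
        rw [this, ih]; ring
    | pred m ih =>
        have := hv (r + (2 * (n : ℤ) + 1) * (-(m : ℤ) - 1))
        rw [show r + (2 * (n : ℤ) + 1) * (-(m : ℤ) - 1) + (2 * (n : ℤ) + 1)
            = r + (2 * (n : ℤ) + 1) * (-(m : ℤ)) by ring] at this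
        rw [ih] at this
        have h2 : v (r + (2 * (n : ℤ) + 1) * (-(m : ℤ) - 1))
            = v r + (2 * (n : ℤ) + 1) * (-(m : ℤ)) - (2 * (n : ℤ) + 1) := by omega
        rw [h2]; ring
  funext i
  set N : ℤ := 2 * (n : ℤ) + 1 with hN
  have hNpos : 0 < N := by positivity
  have hdm : i % N + N * (i / N) = i := by rw [add_comm]; exact Int.mul_ediv_add_emod i N
  have hr1 : 0 ≤ i % N := Int.emod_nonneg i (by omega)
  have hr2 : i % N < N := Int.emod_lt_of_pos i hNpos
  have e1 : w i = w (i % N) + N * (i / N) := by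
    have := hper w hshift (i / N) (i % N)
    rw [show i % N + (2 * (n : ℤ) + 1) * (i / N) = i by rw [← hN]; omega] at this
    rw [this]
  have e1' : w' i = w' (i % N) + N * (i / N) := by
    have := hper w' hshift' (i / N) (i % N)
    rw [show i % N + (2 * (n : ℤ) + 1) * (i / N) = i by rw [← hN]; omega] at this
    rw [this]
  rw [e1, e1', heq0 (i % N) hr1 (by omega)]
end

section
/- Let a be a balanced flush abacus with N = 2n+1, and fix a level m ∈ ℤ (the row of positions mN+1, ..., mN+2n). If there exists i ∈ {1,...,2n} such that positions mN+i and mN+(N-i) are both beads, then m ≤ 0. If there exists i such that both positions are gaps, then m > 0. In particular, no row contains both a symmetric bead pair and a symmetric gap pair. -/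
/-- A balanced flush abacus with `N = 2n+1`: a set `S` of bead positions in `ℤ \\ Nℤ`,
downward closed under subtracting `N` within each runner (flush), such that each
runner `i ∈ {1,…,2n}` (residue class mod `N`) has a greatest (lowest-drawn) bead, and
the greatest beads on runners `i` and `N - i` have labels summing to `N` (balanced). -/
def IsBFA (n : ℕ) (S : Set ℤ) : Prop :=
  (∀ p ∈ S, ¬ ((2 * (n : ℤ) + 1) ∣ p)) ∧
  (∀ p ∈ S, ¬ ((2 * (n : ℤ) + 1) ∣ (p - (2 * (n : ℤ) + 1))) →
    p - (2 * (n : ℤ) + 1) ∈ S) ∧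
  (∀ i : ℤ, 1 ≤ i → i ≤ 2 * (n : ℤ) →
    ∃ m, IsGreatest {p | p ∈ S ∧ p % (2 * (n : ℤ) + 1) = i} m) ∧
  (∀ i : ℤ, 1 ≤ i → i ≤ 2 * (n : ℤ) → ∀ m m' : ℤ,
    IsGreatest {p | p ∈ S ∧ p % (2 * (n : ℤ) + 1) = i} m →
    IsGreatest {p | p ∈ S ∧ p % (2 * (n : ℤ) + 1) = (2 * (n : ℤ) + 1) - i} m' →
    m + m' = 2 * (n : ℤ) + 1)

lemma bfa_down (n : ℕ) (S : Set ℤ) (h : IsBFA n S) {p : ℤ} (hp : p ∈ S) :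
    ∀ k : ℕ, p - (k : ℤ) * (2 * (n : ℤ) + 1) ∈ S := by
  intro k
  induction k with
  | zero => simpa using hp
  | succ k ih =>
    have hnd : ¬ ((2 * (n : ℤ) + 1) ∣ (p - (k : ℤ) * (2 * (n : ℤ) + 1) - (2 * (n : ℤ) + 1))) := by
      intro hd
      apply h.1 p hp
      have h2 : (2 * (n : ℤ) + 1) ∣ ((k : ℤ) * (2 * (n : ℤ) + 1) + (2 * (n : ℤ) + 1)) :=
        ⟨(k : ℤ) + 1, by ring⟩
      have := dvd_add hd h2
      simpa using this
    have := h.2.1 _ ih hnd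
    have heq : p - ((k : ℤ) + 1) * (2 * (n : ℤ) + 1)
        = p - (k : ℤ) * (2 * (n : ℤ) + 1) - (2 * (n : ℤ) + 1) := by ring
    push_cast
    rw [heq]
    exact this

lemma bfa_char (n : ℕ) (S : Set ℤ) (h : IsBFA n S) {i g : ℤ}
    (hi1 : 1 ≤ i) (hi2 : i ≤ 2 * (n : ℤ))
    (hg : IsGreatest {p | p ∈ S ∧ p % (2 * (n : ℤ) + 1) = i} g) (m : ℤ) :
    m * (2 * (n : ℤ) + 1) + i ∈ S ↔ m * (2 * (n : ℤ) + 1) + i ≤ g := by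
  set N : ℤ := 2 * (n : ℤ) + 1 with hN
  have hN0 : 0 < N := by positivity
  have hmod : (m * N + i) % N = i := by
    rw [add_comm, Int.add_mul_emod_self_right]
    exact Int.emod_eq_of_lt (by omega) (by omega)
  constructor
  · intro hmem
    exact hg.2 ⟨hmem, hmod⟩
  · intro hle
    have hgS := hg.1.1
    have hgmod : g % N = i := hg.1.2
    have hdiv : g = N * (g / N) + i := by
      conv_lhs => rw [← Int.mul_ediv_add_emod g N]
      rw [hgmod]
    set q := g / N with hq
    have hmq : m ≤ q := by nlinarith [hN0]
    have hk : (0 : ℤ) ≤ q - m := by omega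
    have := bfa_down n S h hgS (q - m).toNat
    rw [Int.toNat_of_nonneg hk] at this
    have : g - (q - m) * N ∈ S := this
    have heq : g - (q - m) * N = m * N + i := by rw [hdiv]; ring
    rwa [heq] at this

/-- In a balanced flush abacus, if some row (level `m`) contains a symmetric pair of
beads (columns `i` and `N-i`) then `m ≤ 0`; if it contains a symmetric pair of gaps
then `m > 0`; in particular no row contains both. -/
theorem stmt12 (n : ℕ) (hn : 0 < n) (S : Set ℤ) (h : IsBFA n S) :
    ∀ m : ℤ,
      ((∃ i : ℤ, 1 ≤ i ∧ i ≤ 2 * (n : ℤ) ∧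
          m * (2 * (n : ℤ) + 1) + i ∈ S ∧
          m * (2 * (n : ℤ) + 1) + ((2 * (n : ℤ) + 1) - i) ∈ S) → m ≤ 0) ∧
      ((∃ i : ℤ, 1 ≤ i ∧ i ≤ 2 * (n : ℤ) ∧
          m * (2 * (n : ℤ) + 1) + i ∉ S ∧
          m * (2 * (n : ℤ) + 1) + ((2 * (n : ℤ) + 1) - i) ∉ S) → 0 < m) ∧
      ¬ ((∃ i : ℤ, 1 ≤ i ∧ i ≤ 2 * (n : ℤ) ∧
            m * (2 * (n : ℤ) + 1) + i ∈ S ∧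
            m * (2 * (n : ℤ) + 1) + ((2 * (n : ℤ) + 1) - i) ∈ S) ∧
         (∃ i : ℤ, 1 ≤ i ∧ i ≤ 2 * (n : ℤ) ∧
            m * (2 * (n : ℤ) + 1) + i ∉ S ∧
            m * (2 * (n : ℤ) + 1) + ((2 * (n : ℤ) + 1) - i) ∉ S)) := by
  intro m
  have main : ∀ i : ℤ, 1 ≤ i → i ≤ 2 * (n : ℤ) →
      ((m * (2 * (n : ℤ) + 1) + i ∈ S ∧
        m * (2 * (n : ℤ) + 1) + ((2 * (n : ℤ) + 1) - i) ∈ S → m ≤ 0) ∧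
       (m * (2 * (n : ℤ) + 1) + i ∉ S ∧
        m * (2 * (n : ℤ) + 1) + ((2 * (n : ℤ) + 1) - i) ∉ S → 0 < m)) := by
    intro i hi1 hi2
    set N : ℤ := 2 * (n : ℤ) + 1 with hN
    have hj1 : 1 ≤ N - i := by omega
    have hj2 : N - i ≤ 2 * (n : ℤ) := by omega
    obtain ⟨g, hg⟩ := h.2.2.1 i hi1 hi2
    obtain ⟨g', hg'⟩ := h.2.2.1 (N - i) hj1 hj2
    have hbal : g + g' = N := h.2.2.2 i hi1 hi2 g g' hg hg'
    have c1 := bfa_char n S h hi1 hi2 hg m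
    have c2 := bfa_char n S h hj1 hj2 hg' m
    have hN0 : (0 : ℤ) < N := by positivity
    constructor
    · rintro ⟨hb1, hb2⟩
      have l1 := c1.mp hb1
      have l2 := c2.mp hb2
      nlinarith
    · rintro ⟨hb1, hb2⟩
      have l1 : ¬ (m * N + i ≤ g) := fun hle => hb1 (c1.mpr hle)
      have l2 : ¬ (m * N + (N - i) ≤ g') := fun hle => hb2 (c2.mpr hle)
      nlinarith
  refine ⟨?_, ?_, ?_⟩
  · rintro ⟨i, hi1, hi2, hb⟩
    exact (main i hi1 hi2).1 hb
  · rintro ⟨i, hi1, hi2, hb⟩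
    exact (main i hi1 hi2).2 hb
  · rintro ⟨⟨i, hi1, hi2, hb⟩, ⟨j, hj1, hj2, hg⟩⟩
    have := (main i hi1 hi2).1 hb
    have := (main j hj1 hj2).2 hg
    omega
end

section
/- The map sending a mirrored ℤ-permutation w with sorted base window w(1) < ... < w(n) < w(n+1) to the balanced flush abacus whose lowest beads are exactly {w(1), ..., w(2n)} (i.e., the abacus S = {w(j) - kN : 1 ≤ j ≤ 2n, k ≥ 0}) is a bijection between such mirrored ℤ-permutations and balanced flush abaci. -/
namespace S13


lemma divmod_eq {N x q r : ℤ} (h : x = N * q + r) (h0 : 0 ≤ r) (h1 : r < N) :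
    x / N = q ∧ x % N = r := by
  have hN : N ≠ 0 := by omega
  constructor
  · rw [h, show N * q + r = r + q * N by ring, Int.add_mul_ediv_right _ _ hN,
      Int.ediv_eq_zero_of_lt h0 h1, zero_add]
  · rw [h, show N * q + r = r + q * N by ring, Int.add_mul_emod_self_right,
      Int.emod_eq_of_lt h0 h1]

lemma period {N : ℤ} {w : ℤ → ℤ} (hp : ∀ i, w (i + N) = w i + N) :
    ∀ (m i : ℤ), w (i + m * N) = w i + m * N := by
  intro m
  induction m using Int.induction_on with
  | zero => simp
  | succ k ih =>
      intro i
      have e : i + ((k : ℤ) + 1) * N = (i + k * N) + N := by ring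
      rw [e, hp, ih]; ring
  | pred k ih =>
      intro i
      have e : i + (-(k : ℤ)) * N = (i + (-(k:ℤ) - 1) * N) + N := by ring
      have := ih i
      rw [e, hp] at this
      omega

lemma w_zero {w : ℤ → ℤ} (hm : ∀ i, w (-i) = - w i) : w 0 = 0 := by
  have := hm 0; simp at this; omega

lemma mod_inj {N : ℤ} {w : ℤ → ℤ} (hN : 0 < N) (hbij : Function.Bijective w)
    (hp : ∀ i, w (i + N) = w i + N) :
    ∀ i j : ℤ, w i % N = w j % N ↔ i % N = j % N := by
  intro i j
  constructor
  · intro h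
    have hd : N ∣ w j - w i := Int.ModEq.dvd h
    obtain ⟨m, hm⟩ := hd
    rw [mul_comm] at hm
    have : w (i + m * N) = w j := by rw [period hp]; omega
    have hij : i + m * N = j := hbij.1 this
    have : j % N = (i + m * N) % N := by rw [hij]
    rw [this, Int.add_mul_emod_self_right]
  · intro h
    have hd : N ∣ j - i := Int.ModEq.dvd h
    obtain ⟨m, hm⟩ := hd
    rw [mul_comm] at hm
    have : j = i + m * N := by omega
    rw [this, period hp, Int.add_mul_emod_self_right]



variable {n : ℕ}

/-- the abacus associated to `w` -/
def Sw (n : ℕ) (w : ℤ → ℤ) : Set ℤ :=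
  {x : ℤ | ∃ j k : ℤ, 1 ≤ j ∧ j ≤ 2 * (n : ℤ) ∧ 0 ≤ k ∧ x = w j - k * (2 * (n : ℤ) + 1)}

lemma wj_mod {w : ℤ → ℤ} (hbij : Function.Bijective w)
    (hp : ∀ i : ℤ, w (i + (2*(n:ℤ)+1)) = w i + (2*(n:ℤ)+1))
    (hm : ∀ i : ℤ, w (-i) = - w i)
    {j : ℤ} (h1 : 1 ≤ j) (h2 : j ≤ 2*(n:ℤ)) :
    1 ≤ w j % (2*(n:ℤ)+1) ∧ w j % (2*(n:ℤ)+1) ≤ 2*(n:ℤ) := by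
  set N : ℤ := 2*(n:ℤ)+1 with hNdef
  have hN : 0 < N := by positivity
  have hlt := Int.emod_lt_of_pos (w j) hN
  have hge := Int.emod_nonneg (w j) hN.ne'
  rcases eq_or_lt_of_le hge with h0 | h0
  · exfalso
    have hz : w 0 % N = 0 % N := by
      rw [w_zero hm]
    have : w j % N = w 0 % N := by rw [hz, Int.zero_emod]; omega
    have := (mod_inj hN hbij hp j 0).mp this
    rw [Int.zero_emod, Int.emod_eq_of_lt (by omega) (by omega)] at this
    omega
  · omega

lemma mem_Sw {w : ℤ → ℤ} {j : ℤ} (h1 : 1 ≤ j) (h2 : j ≤ 2*(n:ℤ)) : w j ∈ Sw n w :=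
  ⟨j, 0, h1, h2, le_refl 0, by ring⟩

lemma greatest_Sw {w : ℤ → ℤ} (hbij : Function.Bijective w)
    (hp : ∀ i : ℤ, w (i + (2*(n:ℤ)+1)) = w i + (2*(n:ℤ)+1))
    (hm : ∀ i : ℤ, w (-i) = - w i)
    {j : ℤ} (h1 : 1 ≤ j) (h2 : j ≤ 2*(n:ℤ)) :
    IsGreatest {p | p ∈ Sw n w ∧ p % (2*(n:ℤ)+1) = w j % (2*(n:ℤ)+1)} (w j) := by
  set N : ℤ := 2*(n:ℤ)+1 with hNdef
  have hN : 0 < N := by positivity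
  constructor
  · exact ⟨mem_Sw h1 h2, rfl⟩
  · rintro p ⟨⟨j', k, hj1, hj2, hk, hpe⟩, hpm⟩
    rw [← hNdef] at hpe
    have hmod : p % N = w j' % N := by
      rw [hpe, show w j' - k * N = w j' + (-k) * N from by ring, Int.add_mul_emod_self_right]
    have : w j' % N = w j % N := by omega
    have hjj : j' % N = j % N := (mod_inj hN hbij hp j' j).mp this
    rw [Int.emod_eq_of_lt (by omega) (by omega), Int.emod_eq_of_lt (by omega) (by omega)] at hjj
    subst hjj
    have : 0 ≤ k * N := mul_nonneg hk (le_of_lt hN)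
    omega

lemma residues_surj {w : ℤ → ℤ} (hbij : Function.Bijective w)
    (hp : ∀ i : ℤ, w (i + (2*(n:ℤ)+1)) = w i + (2*(n:ℤ)+1))
    (hm : ∀ i : ℤ, w (-i) = - w i)
    {i : ℤ} (hi1 : 1 ≤ i) (hi2 : i ≤ 2*(n:ℤ)) :
    ∃ j : ℤ, 1 ≤ j ∧ j ≤ 2*(n:ℤ) ∧ w j % (2*(n:ℤ)+1) = i := by
  set N : ℤ := 2*(n:ℤ)+1 with hNdef
  have hN : 0 < N := by positivity
  set φ : ℤ → ℤ := fun j => w j % N with hphi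
  have hinj : Set.InjOn φ (Finset.Icc (1:ℤ) (2*(n:ℤ))) := by
    intro a ha b hb hab
    simp only [Finset.coe_Icc, Set.mem_Icc] at ha hb
    have := (mod_inj hN hbij hp a b).mp hab
    rw [Int.emod_eq_of_lt (by omega) (by omega), Int.emod_eq_of_lt (by omega) (by omega)] at this
    exact this
  have hmaps : ∀ a ∈ Finset.Icc (1:ℤ) (2*(n:ℤ)), φ a ∈ Finset.Icc (1:ℤ) (2*(n:ℤ)) := by
    intro a ha
    simp only [Finset.mem_Icc] at ha ⊢
    exact wj_mod hbij hp hm ha.1 ha.2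
  have himg : Finset.image φ (Finset.Icc (1:ℤ) (2*(n:ℤ))) = Finset.Icc (1:ℤ) (2*(n:ℤ)) := by
    apply Finset.eq_of_subset_of_card_le
    · intro x hx
      simp only [Finset.mem_image] at hx
      obtain ⟨a, ha, rfl⟩ := hx
      exact hmaps a ha
    · rw [Finset.card_image_of_injOn hinj]
  have : i ∈ Finset.image φ (Finset.Icc (1:ℤ) (2*(n:ℤ))) := by
    rw [himg]; simp only [Finset.mem_Icc]; exact ⟨hi1, hi2⟩
  simp only [Finset.mem_image, Finset.mem_Icc] at this
  obtain ⟨j, ⟨hj1, hj2⟩, hje⟩ := this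
  exact ⟨j, hj1, hj2, hje⟩




lemma mapsTo' {n : ℕ} {w : ℤ → ℤ} (hbij : Function.Bijective w)
    (hp : ∀ i : ℤ, w (i + (2*(n:ℤ)+1)) = w i + (2*(n:ℤ)+1))
    (hm : ∀ i : ℤ, w (-i) = - w i) :
    (∀ p ∈ Sw n w, ¬ ((2 * (n : ℤ) + 1) ∣ p)) ∧
    (∀ p ∈ Sw n w, ¬ ((2 * (n : ℤ) + 1) ∣ (p - (2 * (n : ℤ) + 1))) →
      p - (2 * (n : ℤ) + 1) ∈ Sw n w) ∧
    (∀ i : ℤ, 1 ≤ i → i ≤ 2 * (n : ℤ) →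
      ∃ m, IsGreatest {p | p ∈ Sw n w ∧ p % (2 * (n : ℤ) + 1) = i} m) ∧
    (∀ i : ℤ, 1 ≤ i → i ≤ 2 * (n : ℤ) → ∀ m m' : ℤ,
      IsGreatest {p | p ∈ Sw n w ∧ p % (2 * (n : ℤ) + 1) = i} m →
      IsGreatest {p | p ∈ Sw n w ∧ p % (2 * (n : ℤ) + 1) = (2 * (n : ℤ) + 1) - i} m' →
      m + m' = 2 * (n : ℤ) + 1) := by
  have hN : (0:ℤ) < 2*(n:ℤ)+1 := by positivity
  have hmodS : ∀ p ∈ Sw n w, ∃ j : ℤ, 1 ≤ j ∧ j ≤ 2*(n:ℤ) ∧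
      p % (2*(n:ℤ)+1) = w j % (2*(n:ℤ)+1) := by
    rintro p ⟨j, k, hj1, hj2, hk, rfl⟩
    exact ⟨j, hj1, hj2, by
      rw [show w j - k * (2*(n:ℤ)+1) = w j + (-k) * (2*(n:ℤ)+1) from by ring,
        Int.add_mul_emod_self_right]⟩
  refine ⟨?_, ?_, ?_, ?_⟩
  · intro p hpS hdvd
    obtain ⟨j, hj1, hj2, hje⟩ := hmodS p hpS
    have h1 := (wj_mod hbij hp hm hj1 hj2)
    have h2 : p % (2*(n:ℤ)+1) = 0 := Int.emod_eq_zero_of_dvd hdvd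
    omega
  · rintro p ⟨j, k, hj1, hj2, hk, rfl⟩ _
    exact ⟨j, k+1, hj1, hj2, by omega, by ring⟩
  · intro i hi1 hi2
    obtain ⟨j, hj1, hj2, hje⟩ := residues_surj hbij hp hm hi1 hi2
    exact ⟨w j, by rw [← hje]; exact greatest_Sw hbij hp hm hj1 hj2⟩
  · intro i hi1 hi2 m m' hg hg'
    obtain ⟨j, hj1, hj2, hje⟩ := residues_surj hbij hp hm hi1 hi2
    have hgj := greatest_Sw hbij hp hm hj1 hj2
    rw [hje] at hgj
    have hm_eq : m = w j := hg.unique hgj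
    have hj1' : 1 ≤ 2*(n:ℤ)+1 - j := by omega
    have hj2' : 2*(n:ℤ)+1 - j ≤ 2*(n:ℤ) := by omega
    have hwm : w (2*(n:ℤ)+1 - j) = 2*(n:ℤ)+1 - w j := by
      rw [show 2*(n:ℤ)+1 - j = -j + (2*(n:ℤ)+1) from by ring, hp, hm]; ring
    have hres : w (2*(n:ℤ)+1 - j) % (2*(n:ℤ)+1) = 2*(n:ℤ)+1 - i := by
      rw [hwm]
      obtain ⟨q, hq⟩ : ∃ q, w j = (2*(n:ℤ)+1) * q + i :=
        ⟨w j / (2*(n:ℤ)+1), by have := Int.mul_ediv_add_emod (w j) (2*(n:ℤ)+1); omega⟩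
      have he : 2*(n:ℤ)+1 - w j = (2*(n:ℤ)+1) * (-q) + (2*(n:ℤ)+1 - i) := by
        rw [hq]; ring
      exact (divmod_eq he (by omega) (by omega)).2
    have hgj' := greatest_Sw hbij hp hm hj1' hj2'
    rw [hres] at hgj'
    have hm'_eq : m' = w (2*(n:ℤ)+1 - j) := hg'.unique hgj'
    rw [hm_eq, hm'_eq, hwm]; ring

-- strict monotonicity on [1, 2n]
lemma smono {w : ℤ → ℤ} (hn : 0 < n)
    (hp : ∀ i : ℤ, w (i + (2*(n:ℤ)+1)) = w i + (2*(n:ℤ)+1))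
    (hm : ∀ i : ℤ, w (-i) = - w i)
    (hs : ∀ i : ℤ, 1 ≤ i → i ≤ (n:ℤ) → w i < w (i+1)) :
    ∀ i j : ℤ, 1 ≤ i → i < j → j ≤ 2*(n:ℤ) → w i < w j := by
  have hmirror : ∀ i : ℤ, w (2*(n:ℤ)+1 - i) = 2*(n:ℤ)+1 - w i := by
    intro i
    have : (2*(n:ℤ)+1 - i) = -i + (2*(n:ℤ)+1) := by ring
    rw [this, hp, hm]; ring
  have hstep : ∀ i : ℤ, 1 ≤ i → i ≤ 2*(n:ℤ) - 1 → w i < w (i+1) := by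
    intro i h1 h2
    by_cases hc : i ≤ (n:ℤ)
    · exact hs i h1 hc
    · -- i = n + 1 + t, t ∈ [0, n-2]
      set t : ℤ := i - (n:ℤ) - 1 with ht
      have h1' : w i = 2*(n:ℤ)+1 - w ((n:ℤ) - t) := by
        have : i = 2*(n:ℤ)+1 - ((n:ℤ) - t) := by omega
        rw [this, hmirror]
      have h2' : w (i+1) = 2*(n:ℤ)+1 - w ((n:ℤ) - t - 1) := by
        have : i + 1 = 2*(n:ℤ)+1 - ((n:ℤ) - t - 1) := by omega
        rw [this, hmirror]
      have := hs ((n:ℤ) - t - 1) (by omega) (by omega)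
      have e : (n:ℤ) - t - 1 + 1 = (n:ℤ) - t := by ring
      rw [e] at this
      omega
  intro i j hi hij hj
  obtain ⟨d, hd⟩ : ∃ d : ℕ, j = i + 1 + d := ⟨(j - i - 1).toNat, by omega⟩
  subst hd
  clear hij
  induction d with
  | zero => simpa using hstep i hi (by omega)
  | succ d ih =>
      have h1 : w i < w (i + 1 + d) := ih (by push_cast at hj ⊢; omega)
      have h2 : w (i + 1 + d) < w (i + 1 + d + 1) := hstep _ (by push_cast; omega) (by push_cast at hj ⊢; omega)
      push_cast
      rw [show i + 1 + ((d:ℤ)+1) = i + 1 + (d:ℤ) + 1 from by ring]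
      push_cast at h1 h2
      omega

lemma eq_of_Sw_eq {n : ℕ} (hn : 0 < n) {w w' : ℤ → ℤ}
    (hbij : Function.Bijective w)
    (hp : ∀ i : ℤ, w (i + (2*(n:ℤ)+1)) = w i + (2*(n:ℤ)+1))
    (hm : ∀ i : ℤ, w (-i) = - w i)
    (hs : ∀ i : ℤ, 1 ≤ i → i ≤ (n:ℤ) → w i < w (i+1))
    (hbij' : Function.Bijective w')
    (hp' : ∀ i : ℤ, w' (i + (2*(n:ℤ)+1)) = w' i + (2*(n:ℤ)+1))
    (hm' : ∀ i : ℤ, w' (-i) = - w' i)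
    (hs' : ∀ i : ℤ, 1 ≤ i → i ≤ (n:ℤ) → w' i < w' (i+1))
    (hSS : Sw n w = Sw n w') : w = w' := by
  have hN : (0:ℤ) < 2*(n:ℤ)+1 := by positivity
  -- the images on [1,2n] agree
  have key : ∀ (u u' : ℤ → ℤ), Function.Bijective u →
      (∀ i : ℤ, u (i + (2*(n:ℤ)+1)) = u i + (2*(n:ℤ)+1)) →
      (∀ i : ℤ, u (-i) = - u i) →
      Function.Bijective u' →
      (∀ i : ℤ, u' (i + (2*(n:ℤ)+1)) = u' i + (2*(n:ℤ)+1)) →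
      (∀ i : ℤ, u' (-i) = - u' i) →
      Sw n u = Sw n u' →
      ∀ j : ℤ, 1 ≤ j → j ≤ 2*(n:ℤ) → ∃ j' : ℤ, 1 ≤ j' ∧ j' ≤ 2*(n:ℤ) ∧ u' j' = u j := by
    intro u u' hub hup hum hub' hup' hum' huS j hj1 hj2
    have hmem : u j ∈ Sw n u' := huS ▸ mem_Sw hj1 hj2
    obtain ⟨j', k, hj1', hj2', hk, he⟩ := hmem
    refine ⟨j', hj1', hj2', ?_⟩
    have hres : u j % (2*(n:ℤ)+1) = u' j' % (2*(n:ℤ)+1) := by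
      rw [he, show u' j' - k * (2*(n:ℤ)+1) = u' j' + (-k) * (2*(n:ℤ)+1) from by ring,
        Int.add_mul_emod_self_right]
    -- u j ≤ u' j' from greatest in Sw u'
    have h1 : u j ≤ u' j' :=
      (greatest_Sw hub' hup' hum' hj1' hj2').2 ⟨huS ▸ mem_Sw hj1 hj2, hres⟩
    -- u' j' ≤ u j from greatest in Sw u
    have h2 : u' j' ≤ u j :=
      (greatest_Sw hub hup hum hj1 hj2).2 ⟨huS.symm ▸ mem_Sw hj1' hj2', hres.symm⟩
    omega
  have hsm := smono hn hp hm hs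
  have hsm' := smono hn hp' hm' hs'
  set F : Fin (2*n) → ℤ := fun t => w ((t:ℤ)+1) with hF
  set G : Fin (2*n) → ℤ := fun t => w' ((t:ℤ)+1) with hG
  have hFmono : StrictMono F := by
    intro t t' htt
    apply hsm ((t:ℤ)+1) ((t':ℤ)+1) (by omega) (by exact_mod_cast by omega)
    have := t'.2; push_cast; omega
  have hGmono : StrictMono G := by
    intro t t' htt
    apply hsm' ((t:ℤ)+1) ((t':ℤ)+1) (by omega) (by exact_mod_cast by omega)
    have := t'.2; push_cast; omega
  set T : Finset ℤ := Finset.image F Finset.univ with hT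
  have hcard : T.card = 2*n := by
    rw [hT, Finset.card_image_of_injective _ hFmono.injective, Finset.card_univ, Fintype.card_fin]
  have hFin : ∀ t, F t ∈ T := fun t => Finset.mem_image_of_mem F (Finset.mem_univ t)
  have hGin : ∀ t, G t ∈ T := by
    intro t
    have ht2 : ((t:ℕ):ℤ) + 1 ≤ 2*(n:ℤ) := by have := t.2; push_cast; omega
    obtain ⟨j, hj1, hj2, hje⟩ := key w' w hbij' hp' hm' hbij hp hm hSS.symm ((t:ℤ)+1) (by omega) ht2
    have hidx : ((j-1).toNat) < 2*n := by omega
    have : F ⟨(j-1).toNat, hidx⟩ = G t := by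
      simp only [hF, hG]
      rw [show ((((j-1).toNat : ℕ)):ℤ) + 1 = j from by omega, hje]
    rw [← this]; exact hFin _
  have hFeq : F = T.orderEmbOfFin hcard := Finset.orderEmbOfFin_unique hcard hFin hFmono
  have hGeq : G = T.orderEmbOfFin hcard := Finset.orderEmbOfFin_unique hcard hGin hGmono
  have hfg : ∀ j : ℤ, 1 ≤ j → j ≤ 2*(n:ℤ) → w j = w' j := by
    intro j hj1 hj2
    have hidx : (j-1).toNat < 2*n := by omega
    have e1 : F ⟨(j-1).toNat, hidx⟩ = w j := by
      simp only [hF]; rw [show ((((j-1).toNat : ℕ)):ℤ) + 1 = j from by omega]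
    have e2 : G ⟨(j-1).toNat, hidx⟩ = w' j := by
      simp only [hG]; rw [show ((((j-1).toNat : ℕ)):ℤ) + 1 = j from by omega]
    rw [← e1, ← e2, hFeq, hGeq]
  funext i
  have h0 : 0 ≤ i % (2*(n:ℤ)+1) := Int.emod_nonneg i hN.ne'
  have h1 : i % (2*(n:ℤ)+1) < 2*(n:ℤ)+1 := Int.emod_lt_of_pos i hN
  have hie : i = i % (2*(n:ℤ)+1) + (i / (2*(n:ℤ)+1)) * (2*(n:ℤ)+1) := by
    have := Int.mul_ediv_add_emod i (2*(n:ℤ)+1)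
    have e : (i / (2*(n:ℤ)+1)) * (2*(n:ℤ)+1) = (2*(n:ℤ)+1) * (i / (2*(n:ℤ)+1)) := by ring
    omega
  rw [hie, period hp, period hp']
  rcases eq_or_lt_of_le h0 with hr0 | hr0
  · rw [← hr0, w_zero hm, w_zero hm']
  · rw [hfg _ (by omega) (by omega)]

lemma exists_w {n : ℕ} (hn : 0 < n) {S : Set ℤ}
    (h1 : ∀ p ∈ S, ¬ ((2 * (n : ℤ) + 1) ∣ p))
    (h2 : ∀ p ∈ S, ¬ ((2 * (n : ℤ) + 1) ∣ (p - (2 * (n : ℤ) + 1))) →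
      p - (2 * (n : ℤ) + 1) ∈ S)
    (h3 : ∀ i : ℤ, 1 ≤ i → i ≤ 2 * (n : ℤ) →
      ∃ m, IsGreatest {p | p ∈ S ∧ p % (2 * (n : ℤ) + 1) = i} m)
    (h4 : ∀ i : ℤ, 1 ≤ i → i ≤ 2 * (n : ℤ) → ∀ m m' : ℤ,
      IsGreatest {p | p ∈ S ∧ p % (2 * (n : ℤ) + 1) = i} m →
      IsGreatest {p | p ∈ S ∧ p % (2 * (n : ℤ) + 1) = (2 * (n : ℤ) + 1) - i} m' →
      m + m' = 2 * (n : ℤ) + 1) :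
    ∃ w : ℤ → ℤ, Function.Bijective w ∧
      (∀ i : ℤ, w (i + (2*(n:ℤ)+1)) = w i + (2*(n:ℤ)+1)) ∧
      (∀ i : ℤ, w (-i) = - w i) ∧
      (∀ i : ℤ, 1 ≤ i → i ≤ (n:ℤ) → w i < w (i+1)) ∧
      Sw n w = S := by
  classical
  have hN : (0:ℤ) < 2*(n:ℤ)+1 := by positivity
  -- greatest bead on each runner
  set g : ℤ → ℤ := fun i => if h : 1 ≤ i ∧ i ≤ 2*(n:ℤ) then (h3 i h.1 h.2).choose else 0
    with hgdef
  have hg : ∀ i : ℤ, 1 ≤ i → i ≤ 2*(n:ℤ) →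
      IsGreatest {p | p ∈ S ∧ p % (2*(n:ℤ)+1) = i} (g i) := by
    intro i hi1 hi2
    simp only [hgdef, dif_pos (⟨hi1, hi2⟩ : 1 ≤ i ∧ i ≤ 2*(n:ℤ))]
    exact (h3 i hi1 hi2).choose_spec
  have hgS : ∀ i : ℤ, 1 ≤ i → i ≤ 2*(n:ℤ) → g i ∈ S := fun i a b => (hg i a b).1.1
  have hgmod : ∀ i : ℤ, 1 ≤ i → i ≤ 2*(n:ℤ) → g i % (2*(n:ℤ)+1) = i :=
    fun i a b => (hg i a b).1.2
  -- the set of greatest beads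
  set M : Finset ℤ := (Finset.Icc (1:ℤ) (2*(n:ℤ))).image g with hMdef
  have hMmem : ∀ m ∈ M, ∃ i : ℤ, 1 ≤ i ∧ i ≤ 2*(n:ℤ) ∧ g i = m := by
    intro m hm
    simp only [hMdef, Finset.mem_image, Finset.mem_Icc] at hm
    obtain ⟨i, ⟨a, b⟩, c⟩ := hm
    exact ⟨i, a, b, c⟩
  have hginM : ∀ i : ℤ, 1 ≤ i → i ≤ 2*(n:ℤ) → g i ∈ M := by
    intro i a b
    simp only [hMdef, Finset.mem_image, Finset.mem_Icc]
    exact ⟨i, ⟨a, b⟩, rfl⟩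
  have hMmod : ∀ m ∈ M, (1 ≤ m % (2*(n:ℤ)+1) ∧ m % (2*(n:ℤ)+1) ≤ 2*(n:ℤ)) ∧
      g (m % (2*(n:ℤ)+1)) = m := by
    intro m hm
    obtain ⟨i, a, b, c⟩ := hMmem m hm
    have : m % (2*(n:ℤ)+1) = i := by rw [← c]; exact hgmod i a b
    rw [this, c]
    exact ⟨⟨a, b⟩, rfl⟩
  have hMcard : M.card = 2*n := by
    rw [hMdef, Finset.card_image_of_injOn]
    · rw [Int.card_Icc]; omega
    · intro x hx y hy hxy
      simp only [Finset.coe_Icc, Set.mem_Icc] at hx hy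
      rw [← hgmod x hx.1 hx.2, ← hgmod y hy.1 hy.2, hxy]
  set σ : Fin (2*n) ↪o ℤ := M.orderEmbOfFin hMcard with hσdef
  have hσM : ∀ t, σ t ∈ M := fun t => Finset.orderEmbOfFin_mem M hMcard t
  have hMrange : ∀ m ∈ M, ∃ t, σ t = m := by
    intro m hm
    have : (m:ℤ) ∈ Set.range (σ : Fin (2*n) → ℤ) := by
      rw [hσdef, Finset.range_orderEmbOfFin]; exact_mod_cast hm
    exact this
  -- M is invariant under m ↦ N - m
  have hinv : ∀ m ∈ M, (2*(n:ℤ)+1 - m) ∈ M := by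
    intro m hm
    obtain ⟨i, a, b, c⟩ := hMmem m hm
    have hbal := h4 i a b (g i) (g (2*(n:ℤ)+1 - i)) (hg i a b) (hg _ (by omega) (by omega))
    have : 2*(n:ℤ)+1 - m = g (2*(n:ℤ)+1 - i) := by omega
    rw [this]
    exact hginM _ (by omega) (by omega)
  -- reversal property of σ
  have hrev : ∀ t : Fin (2*n), σ t + σ t.rev = 2*(n:ℤ)+1 := by
    have hτmono : StrictMono (fun t : Fin (2*n) => 2*(n:ℤ)+1 - σ t.rev) := by
      intro t t' htt
      have : t'.rev < t.rev := by rw [Fin.rev_lt_rev]; exact htt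
      have := σ.strictMono this
      simp only
      omega
    have hτmem : ∀ t : Fin (2*n), 2*(n:ℤ)+1 - σ t.rev ∈ M := fun t => hinv _ (hσM t.rev)
    have := Finset.orderEmbOfFin_unique hMcard hτmem hτmono
    rw [← hσdef] at this
    intro t
    have := congrFun this t
    omega
  -- the sorted labelling
  set a : ℤ → ℤ := fun r =>
    if h : 1 ≤ r ∧ r ≤ 2*(n:ℤ) then σ ⟨(r-1).toNat, by omega⟩ else 0 with hadef
  have ha0 : a 0 = 0 := by
    simp only [hadef]; rw [dif_neg (by omega)]
  have haσ : ∀ r : ℤ, (h : 1 ≤ r ∧ r ≤ 2*(n:ℤ)) → a r = σ ⟨(r-1).toNat, by omega⟩ := by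
    intro r h
    simp only [hadef, dif_pos h]
  have haM : ∀ r : ℤ, 1 ≤ r → r ≤ 2*(n:ℤ) → a r ∈ M := by
    intro r hr1 hr2
    rw [haσ r ⟨hr1, hr2⟩]
    exact hσM _
  have hamono : ∀ r r' : ℤ, 1 ≤ r → r < r' → r' ≤ 2*(n:ℤ) → a r < a r' := by
    intro r r' hr1 hrr hr2
    rw [haσ r ⟨hr1, by omega⟩, haσ r' ⟨by omega, hr2⟩]
    apply σ.strictMono
    simp only [Fin.mk_lt_mk]
    omega
  have hasurj : ∀ m ∈ M, ∃ r : ℤ, 1 ≤ r ∧ r ≤ 2*(n:ℤ) ∧ a r = m := by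
    intro m hm
    obtain ⟨t, ht⟩ := hMrange m hm
    refine ⟨(t:ℤ)+1, by omega, by have := t.2; push_cast; omega, ?_⟩
    rw [haσ ((t:ℤ)+1) ⟨by omega, by have := t.2; push_cast; omega⟩, ← ht]
    congr 1
    ext
    simp only
    omega
  have hamod : ∀ r : ℤ, 1 ≤ r → r ≤ 2*(n:ℤ) →
      (1 ≤ a r % (2*(n:ℤ)+1) ∧ a r % (2*(n:ℤ)+1) ≤ 2*(n:ℤ)) ∧
      g (a r % (2*(n:ℤ)+1)) = a r := fun r hr1 hr2 => hMmod _ (haM r hr1 hr2)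
  have hainj : ∀ r r' : ℤ, 0 ≤ r → r ≤ 2*(n:ℤ) → 0 ≤ r' → r' ≤ 2*(n:ℤ) →
      a r % (2*(n:ℤ)+1) = a r' % (2*(n:ℤ)+1) → r = r' := by
    have hinj1 : ∀ r r' : ℤ, 1 ≤ r → r ≤ 2*(n:ℤ) → 1 ≤ r' → r' ≤ 2*(n:ℤ) →
        a r = a r' → r = r' := by
      intro r r' a1 a2 b1 b2 he
      rcases lt_trichotomy r r' with h | h | h
      · have := hamono r r' a1 h b2; omega
      · exact h
      · have := hamono r' r b1 h a2; omega
    intro r r' hr0 hr2 hr0' hr2' he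
    rcases eq_or_lt_of_le hr0 with h | h <;> rcases eq_or_lt_of_le hr0' with h' | h'
    · omega
    · exfalso; rw [← h, ha0] at he
      have := (hamod r' (by omega) hr2').1
      simp only [Int.zero_emod] at he
      omega
    · exfalso; rw [← h', ha0] at he
      have := (hamod r (by omega) hr2).1
      simp only [Int.zero_emod] at he
      omega
    · have e1 := (hamod r (by omega) hr2).2
      have e2 := (hamod r' (by omega) hr2').2
      rw [he] at e1
      exact hinj1 r r' (by omega) hr2 (by omega) hr2' (e1.symm.trans e2)
  have harev : ∀ r : ℤ, 1 ≤ r → r ≤ 2*(n:ℤ) → a r + a (2*(n:ℤ)+1 - r) = 2*(n:ℤ)+1 := by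
    intro r hr1 hr2
    rw [haσ r ⟨hr1, hr2⟩, haσ (2*(n:ℤ)+1 - r) ⟨by omega, by omega⟩]
    have hrevidx : (⟨(2*(n:ℤ)+1-r-1).toNat, by omega⟩ : Fin (2*n)) =
        (⟨(r-1).toNat, by omega⟩ : Fin (2*n)).rev := by
      ext
      simp only [Fin.val_rev]
      omega
    rw [hrevidx]
    exact hrev _
  -- the permutation
  set w : ℤ → ℤ := fun i =>
    (2*(n:ℤ)+1) * (i / (2*(n:ℤ)+1)) + a (i % (2*(n:ℤ)+1)) with hwdef
  have hmodbd : ∀ i : ℤ, 0 ≤ i % (2*(n:ℤ)+1) ∧ i % (2*(n:ℤ)+1) < 2*(n:ℤ)+1 :=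
    fun i => ⟨Int.emod_nonneg i hN.ne', Int.emod_lt_of_pos i hN⟩
  have hwmod : ∀ i : ℤ, w i % (2*(n:ℤ)+1) = a (i % (2*(n:ℤ)+1)) % (2*(n:ℤ)+1) := by
    intro i
    simp only [hwdef]
    rw [show (2*(n:ℤ)+1) * (i / (2*(n:ℤ)+1)) + a (i % (2*(n:ℤ)+1)) =
      a (i % (2*(n:ℤ)+1)) + (i / (2*(n:ℤ)+1)) * (2*(n:ℤ)+1) from by ring,
      Int.add_mul_emod_self_right]
  -- periodicity
  have hper : ∀ i : ℤ, w (i + (2*(n:ℤ)+1)) = w i + (2*(n:ℤ)+1) := by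
    intro i
    have hdm := divmod_eq (x := i + (2*(n:ℤ)+1))
      (show i + (2*(n:ℤ)+1) = (2*(n:ℤ)+1) * (i / (2*(n:ℤ)+1) + 1) + i % (2*(n:ℤ)+1) from by
        have := Int.mul_ediv_add_emod i (2*(n:ℤ)+1); rw [mul_add, mul_one]; omega)
      (hmodbd i).1 (hmodbd i).2
    simp only [hwdef]
    rw [hdm.1, hdm.2]
    ring
  -- w of small values
  have hwsmall : ∀ r : ℤ, 0 ≤ r → r < 2*(n:ℤ)+1 → w r = a r := by
    intro r h0 h1
    have hdm := divmod_eq (x := r) (show r = (2*(n:ℤ)+1) * 0 + r from by ring) h0 h1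
    simp only [hwdef]
    rw [hdm.1, hdm.2]
    ring
  have hw0 : w 0 = 0 := by rw [hwsmall 0 le_rfl (by omega), ha0]
  -- mirror
  have hmir : ∀ i : ℤ, w (-i) = - w i := by
    intro i
    obtain ⟨h0, h1⟩ := hmodbd i
    have hie : i = (2*(n:ℤ)+1) * (i / (2*(n:ℤ)+1)) + i % (2*(n:ℤ)+1) :=
      (Int.mul_ediv_add_emod i _).symm
    rcases eq_or_lt_of_le h0 with hr | hr
    · have hdm := divmod_eq (x := -i)
        (show -i = (2*(n:ℤ)+1) * (-(i / (2*(n:ℤ)+1))) + 0 from by rw [mul_neg]; omega)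
        le_rfl (by omega)
      simp only [hwdef]
      rw [hdm.1, hdm.2, ← hr, ha0]
      ring
    · have hdm := divmod_eq (x := -i)
        (show -i = (2*(n:ℤ)+1) * (-(i / (2*(n:ℤ)+1)) - 1) + (2*(n:ℤ)+1 - i % (2*(n:ℤ)+1))
          from by rw [mul_sub, mul_neg, mul_one]; omega) (by omega) (by omega)
      simp only [hwdef]
      rw [hdm.1, hdm.2]
      have := harev (i % (2*(n:ℤ)+1)) (by omega) (by omega)
      rw [mul_sub, mul_neg, mul_one]
      omega
  -- injective
  have hwinj : Function.Injective w := by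
    intro i j he
    have hmij : i % (2*(n:ℤ)+1) = j % (2*(n:ℤ)+1) := by
      apply hainj _ _ (hmodbd i).1 (by have := (hmodbd i).2; omega)
        (hmodbd j).1 (by have := (hmodbd j).2; omega)
      rw [← hwmod, ← hwmod, he]
    have hwi : w i = (2*(n:ℤ)+1) * (i / (2*(n:ℤ)+1)) + a (i % (2*(n:ℤ)+1)) := rfl
    have hwj : w j = (2*(n:ℤ)+1) * (j / (2*(n:ℤ)+1)) + a (j % (2*(n:ℤ)+1)) := rfl
    rw [hwi, hwj, hmij] at he
    have hq : i / (2*(n:ℤ)+1) = j / (2*(n:ℤ)+1) := by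
      have h2 : (2*(n:ℤ)+1) * (i / (2*(n:ℤ)+1)) = (2*(n:ℤ)+1) * (j / (2*(n:ℤ)+1)) := by omega
      exact mul_left_cancel₀ hN.ne' h2
    have e1 := Int.mul_ediv_add_emod i (2*(n:ℤ)+1)
    have e2 := Int.mul_ediv_add_emod j (2*(n:ℤ)+1)
    rw [hq, hmij] at e1
    omega
  -- surjective
  have hwsurj : Function.Surjective w := by
    intro y
    obtain ⟨h0, h1⟩ := hmodbd y
    rcases eq_or_lt_of_le h0 with hr | hr
    · refine ⟨y, ?_⟩
      simp only [hwdef]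
      rw [← hr, ha0]
      have := Int.mul_ediv_add_emod y (2*(n:ℤ)+1)
      omega
    · set s : ℤ := y % (2*(n:ℤ)+1) with hs
      obtain ⟨r, hr1, hr2, hre⟩ := hasurj (g s) (hginM s (by omega) (by omega))
      have hgsm : g s % (2*(n:ℤ)+1) = s := hgmod s (by omega) (by omega)
      have hdvd : (2*(n:ℤ)+1) ∣ y - g s := by
        have : y % (2*(n:ℤ)+1) = g s % (2*(n:ℤ)+1) := by omega
        exact Int.ModEq.dvd this.symm
      obtain ⟨t, ht⟩ := hdvd
      refine ⟨r + t * (2*(n:ℤ)+1), ?_⟩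
      have hdm := divmod_eq (x := r + t * (2*(n:ℤ)+1))
        (show r + t * (2*(n:ℤ)+1) = (2*(n:ℤ)+1) * t + r from by ring) (by omega) (by omega)
      simp only [hwdef]
      rw [hdm.1, hdm.2, hre]
      omega
  -- sorted
  have hsort : ∀ i : ℤ, 1 ≤ i → i ≤ (n:ℤ) → w i < w (i+1) := by
    intro i hi1 hi2
    rw [hwsmall i (by omega) (by omega), hwsmall (i+1) (by omega) (by omega)]
    exact hamono i (i+1) hi1 (by omega) (by omega)
  -- membership in S downward
  have hdown : ∀ (k : ℕ) (i : ℤ), 1 ≤ i → i ≤ 2*(n:ℤ) → g i - k * (2*(n:ℤ)+1) ∈ S := by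
    intro k
    induction k with
    | zero => intro i a b; simpa using hgS i a b
    | succ k ih =>
        intro i a b
        have hmem := ih i a b
        have hmod : (g i - k * (2*(n:ℤ)+1)) % (2*(n:ℤ)+1) = i := by
          rw [show g i - (k:ℤ) * (2*(n:ℤ)+1) = g i + (-(k:ℤ)) * (2*(n:ℤ)+1) from by ring,
            Int.add_mul_emod_self_right]
          exact hgmod i a b
        have hnd : ¬ ((2*(n:ℤ)+1) ∣ (g i - k * (2*(n:ℤ)+1) - (2*(n:ℤ)+1))) := by
          intro hd
          have : (g i - k * (2*(n:ℤ)+1) - (2*(n:ℤ)+1)) % (2*(n:ℤ)+1) = 0 :=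
            Int.emod_eq_zero_of_dvd hd
          rw [show g i - (k:ℤ) * (2*(n:ℤ)+1) - (2*(n:ℤ)+1) =
            g i - k * (2*(n:ℤ)+1) + (-1) * (2*(n:ℤ)+1) from by ring,
            Int.add_mul_emod_self_right, hmod] at this
          omega
        have := h2 _ hmem hnd
        have e : g i - (k:ℤ) * (2*(n:ℤ)+1) - (2*(n:ℤ)+1) = g i - ((k:ℕ)+1 : ℕ) * (2*(n:ℤ)+1) := by
          push_cast; ring
        rw [e] at this
        exact this
  -- S description
  have hSdesc : ∀ p, p ∈ S ↔ ∃ i k : ℤ, 1 ≤ i ∧ i ≤ 2*(n:ℤ) ∧ 0 ≤ k ∧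
      p = g i - k * (2*(n:ℤ)+1) := by
    intro p
    constructor
    · intro hp
      set i : ℤ := p % (2*(n:ℤ)+1) with hi
      have hi0 : i ≠ 0 := by
        intro h
        exact h1 p hp (Int.dvd_of_emod_eq_zero (by omega))
      have hib : 0 ≤ i ∧ i < 2*(n:ℤ)+1 := hmodbd p
      have hple : p ≤ g i := (hg i (by omega) (by omega)).2 ⟨hp, rfl⟩
      have hgsm : g i % (2*(n:ℤ)+1) = i := hgmod i (by omega) (by omega)
      have hdvd : (2*(n:ℤ)+1) ∣ g i - p := by
        have : p % (2*(n:ℤ)+1) = g i % (2*(n:ℤ)+1) := by omega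
        exact Int.ModEq.dvd this
      obtain ⟨t, ht⟩ := hdvd
      rw [mul_comm] at ht
      refine ⟨i, t, by omega, by omega, ?_, by omega⟩
      by_contra hneg
      push_neg at hneg
      nlinarith [hN]
    · rintro ⟨i, k, a, b, hk, rfl⟩
      have : g i - k * (2*(n:ℤ)+1) = g i - (k.toNat : ℤ) * (2*(n:ℤ)+1) := by
        rw [Int.toNat_of_nonneg hk]
      rw [this]
      exact hdown k.toNat i a b
  -- Sw = S
  have hSw : Sw n w = S := by
    ext x
    constructor
    · rintro ⟨j, k, hj1, hj2, hk, rfl⟩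
      rw [hSdesc]
      have hwj : w j = a j := hwsmall j (by omega) (by omega)
      obtain ⟨⟨b1, b2⟩, hge⟩ := hamod j hj1 hj2
      exact ⟨a j % (2*(n:ℤ)+1), k, b1, b2, hk, by rw [hge, hwj]⟩
    · intro hx
      rw [hSdesc] at hx
      obtain ⟨i, k, a1, a2, hk, rfl⟩ := hx
      obtain ⟨r, hr1, hr2, hre⟩ := hasurj (g i) (hginM i a1 a2)
      refine ⟨r, k, hr1, hr2, hk, ?_⟩
      rw [hwsmall r (by omega) (by omega), hre]
  exact ⟨w, ⟨hwinj, hwsurj⟩, hper, hmir, hsort, hSw⟩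

end S13

/-- The map sending a sorted mirrored ℤ-permutation `w` to the abacus whose beads are
`{w j - k*N : 1 ≤ j ≤ 2n, k ≥ 0}` is a bijection onto the balanced flush abaci. -/
theorem stmt13 (n : ℕ) (hn : 0 < n) :
    Set.BijOn
      (fun w : ℤ → ℤ =>
        {x : ℤ | ∃ j k : ℤ, 1 ≤ j ∧ j ≤ 2 * (n : ℤ) ∧ 0 ≤ k ∧
          x = w j - k * (2 * (n : ℤ) + 1)})
      {w : ℤ → ℤ | (Function.Bijective w ∧
          (∀ i : ℤ, w (i + (2 * (n : ℤ) + 1)) = w i + (2 * (n : ℤ) + 1)) ∧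
          (∀ i : ℤ, w (-i) = - w i)) ∧
        (∀ i : ℤ, 1 ≤ i → i ≤ (n : ℤ) → w i < w (i + 1))}
      {S : Set ℤ | IsBFA n S} := by
  refine ⟨?_, ?_, ?_⟩
  · rintro w ⟨⟨hbij, hp, hm⟩, hs⟩
    show IsBFA n (S13.Sw n w)
    exact S13.mapsTo' hbij hp hm
  · rintro w ⟨⟨hbij, hp, hm⟩, hs⟩ w' ⟨⟨hbij', hp', hm'⟩, hs'⟩ heq
    exact S13.eq_of_Sw_eq hn hbij hp hm hs hbij' hp' hm' hs' heq
  · rintro S hS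
    obtain ⟨h1, h2, h3, h4⟩ := hS
    obtain ⟨w, hbij, hp, hm, hs, hSw⟩ := S13.exists_w hn h1 h2 h3 h4
    exact ⟨w, ⟨⟨hbij, hp, hm⟩, hs⟩, hSw⟩
end

section
/- Let a be a balanced flush abacus with N = 2n+1. The number of beads succeeding position N in reading order (i.e., beads b with b > N, under the linear order on positions) equals the number of gaps preceding position N in reading order (i.e., gaps g with 0 < g < N or g < 0, counting positions not in Nℤ that are less than N and greater than the first gap). -/
/-- In a balanced flush abacus, the set of beads succeeding position `N` and the set of
gaps preceding position `N` in reading order are finite and of equal cardinality. -/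
theorem stmt14 (n : ℕ) (hn : 0 < n) (S : Set ℤ) (h : IsBFA n S) :
    {b : ℤ | b ∈ S ∧ (2 * (n : ℤ) + 1) < b}.Finite ∧
    {g : ℤ | g ∉ S ∧ ¬ ((2 * (n : ℤ) + 1) ∣ g) ∧ g < 2 * (n : ℤ) + 1 ∧
      ∃ b ∈ S, g < b}.Finite ∧
    {b : ℤ | b ∈ S ∧ (2 * (n : ℤ) + 1) < b}.ncard =
      {g : ℤ | g ∉ S ∧ ¬ ((2 * (n : ℤ) + 1) ∣ g) ∧ g < 2 * (n : ℤ) + 1 ∧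
        ∃ b ∈ S, g < b}.ncard := by
  obtain ⟨h1, h2, h3, h4⟩ := h
  set N : ℤ := 2 * (n : ℤ) + 1 with hNdef
  have hNpos : (0 : ℤ) < N := by omega
  -- S is closed under subtracting N
  have hsub : ∀ q ∈ S, q - N ∈ S := by
    intro q hq
    refine h2 q hq ?_
    intro hd
    exact h1 q hq (by have := dvd_add hd (dvd_refl N); simpa using this)
  have hsubk : ∀ k : ℕ, ∀ q ∈ S, q - (k : ℤ) * N ∈ S := by
    intro k
    induction k with
    | zero => intro q hq; simpa using hq
    | succ k ih =>
      intro q hq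
      have h' := hsub _ (ih q hq)
      have heq : q - ((k : ℤ) + 1) * N = q - (k : ℤ) * N - N := by ring
      rw [show ((k + 1 : ℕ) : ℤ) = (k : ℤ) + 1 by push_cast; ring, heq]
      exact h'
  -- runner membership characterization
  have mem_iff : ∀ i : ℤ, ∀ m, IsGreatest {p | p ∈ S ∧ p % N = i} m →
      ∀ p : ℤ, p % N = i → (p ∈ S ↔ p ≤ m) := by
    intro i m hm p hp
    constructor
    · intro hpS; exact hm.2 ⟨hpS, hp⟩
    · intro hpm
      have hmS := hm.1.1
      have hmi := hm.1.2
      have hdvd : N ∣ (m - p) := by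
        have hsm := Int.sub_emod m p N
        rw [hmi, hp] at hsm
        simp at hsm
        exact hsm
      obtain ⟨k, hk⟩ := hdvd
      have hk0 : 0 ≤ k := by nlinarith
      lift k to ℕ using hk0 with k
      have h' := hsubk k m hmS
      have : m - (k : ℤ) * N = p := by linarith
      rwa [this] at h'
  -- the key involution
  have key : ∀ p : ℤ, ¬ N ∣ p → (p ∈ S ↔ 2 * N - p ∉ S) := by
    intro p hp
    have hi0 : 0 ≤ p % N := Int.emod_nonneg p (by omega)
    have hiN : p % N < N := Int.emod_lt_of_pos p hNpos
    have hine : p % N ≠ 0 := fun hh => hp (Int.dvd_of_emod_eq_zero hh)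
    set i := p % N with hidef
    have hi1 : 1 ≤ i := by omega
    have hi2 : i ≤ 2 * (n : ℤ) := by omega
    obtain ⟨m, hm⟩ := h3 i hi1 hi2
    obtain ⟨m', hm'⟩ := h3 (N - i) (by omega) (by omega)
    have hmm' : m + m' = N := h4 i hi1 hi2 m m' hm hm'
    have hq : (2 * N - p) % N = N - i := by
      have hpe : N * (p / N) + p % N = p := Int.mul_ediv_add_emod p N
      have h2Np : 2 * N - p = (N - i) + N * (1 - p / N) := by
        rw [hidef]; linear_combination hpe
      rw [h2Np, Int.add_mul_emod_self_left]
      exact Int.emod_eq_of_lt (by omega) (by omega)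
    have hiff1 := mem_iff i m hm p rfl
    have hiff2 := mem_iff (N - i) m' hm' (2 * N - p) hq
    have hm'mod : m' % N = N - i := hm'.1.2
    constructor
    · intro hpS hcon
      have e1 : p ≤ m := hiff1.mp hpS
      have e2 : 2 * N - p ≤ m' := hiff2.mp hcon
      linarith
    · intro hns
      have e2 : ¬ (2 * N - p ≤ m') := fun hc => hns (hiff2.mpr hc)
      push_neg at e2
      have hdvd : N ∣ (2 * N - p - m') := by
        have hsm := Int.sub_emod (2 * N - p) m' N
        rw [hq, hm'mod] at hsm
        simp at hsm
        exact hsm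
      have hle : N ≤ 2 * N - p - m' := Int.le_of_dvd (by omega) hdvd
      exact hiff1.mpr (by linarith)
  -- a uniform upper bound on S
  have h3' : ∀ i : ℤ, ∃ m, (1 ≤ i → i ≤ 2 * (n : ℤ) →
      IsGreatest {p | p ∈ S ∧ p % N = i} m) := by
    intro i
    by_cases hc : 1 ≤ i ∧ i ≤ 2 * (n : ℤ)
    · obtain ⟨m, hm⟩ := h3 i hc.1 hc.2
      exact ⟨m, fun _ _ => hm⟩
    · exact ⟨0, fun a b => absurd ⟨a, b⟩ hc⟩
  choose mfun hmfun using h3'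
  have hne : (Finset.Icc (1 : ℤ) (2 * (n : ℤ))).Nonempty :=
    ⟨1, by simp; omega⟩
  set M := (Finset.Icc (1 : ℤ) (2 * (n : ℤ))).sup' hne mfun with hM
  have hbound : ∀ p ∈ S, p ≤ M := by
    intro p hpS
    have hp := h1 p hpS
    have hi0 : 0 ≤ p % N := Int.emod_nonneg p (by omega)
    have hiN : p % N < N := Int.emod_lt_of_pos p hNpos
    have hine : p % N ≠ 0 := fun hh => hp (Int.dvd_of_emod_eq_zero hh)
    have hmem : p % N ∈ Finset.Icc (1 : ℤ) (2 * (n : ℤ)) := by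
      rw [Finset.mem_Icc]; omega
    have h1' : p ≤ mfun (p % N) :=
      (hmfun (p % N) (by omega) (by omega)).2 ⟨hpS, rfl⟩
    exact le_trans h1' (Finset.le_sup' mfun hmem)
  have hBfin : {b : ℤ | b ∈ S ∧ N < b}.Finite := by
    refine (Set.finite_Icc (N + 1) M).subset ?_
    intro b hb
    obtain ⟨hb1, hb2⟩ := hb
    rw [Set.mem_Icc]
    exact ⟨by omega, hbound b hb1⟩
  have hinj : Function.Injective (fun x : ℤ => 2 * N - x) := by
    intro a b hab
    dsimp at hab
    omega
  have hGeq : {g : ℤ | g ∉ S ∧ ¬ N ∣ g ∧ g < N ∧ ∃ b ∈ S, g < b} =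
      (fun x : ℤ => 2 * N - x) '' {b : ℤ | b ∈ S ∧ N < b} := by
    ext g
    simp only [Set.mem_setOf_eq, Set.mem_image]
    constructor
    · rintro ⟨hgS, hgd, hgN, -⟩
      have hd : ¬ N ∣ (2 * N - g) := by
        intro hdd
        have hNN : N ∣ 2 * N := ⟨2, by ring⟩
        have h' := dvd_sub hNN hdd
        rw [show 2 * N - (2 * N - g) = g by ring] at h'
        exact hgd h'
      have hkey := key (2 * N - g) hd
      rw [show 2 * N - (2 * N - g) = g by ring] at hkey
      refine ⟨2 * N - g, ⟨hkey.mpr hgS, by omega⟩, by ring⟩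
    · rintro ⟨b, ⟨hbS, hbN⟩, rfl⟩
      have hbd := h1 b hbS
      have hd : ¬ N ∣ (2 * N - b) := by
        intro hdd
        have hNN : N ∣ 2 * N := ⟨2, by ring⟩
        have h' := dvd_sub hNN hdd
        rw [show 2 * N - (2 * N - b) = b by ring] at h'
        exact hbd h'
      exact ⟨(key b hbd).mp hbS, hd, by omega, b, hbS, by omega⟩
  have hGfin : {g : ℤ | g ∉ S ∧ ¬ N ∣ g ∧ g < N ∧ ∃ b ∈ S, g < b}.Finite := by
    rw [hGeq]; exact hBfin.image _
  refine ⟨hBfin, hGfin, ?_⟩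
  rw [hGeq, Set.ncard_image_of_injective _ hinj]
end

section
/- Let λ be the partition whose southeast boundary lattice path is obtained from a balanced flush abacus by reading positions in increasing order and recording a north-step for each bead and an east-step for each gap. Then λ is a (2n)-core: no box of λ has hook length divisible by 2n. -/
/-- The order isomorphism from abacus positions `ℤ \\ Nℤ` (in reading order) to `ℤ`,
sending position `p` to its index among non-multiples of `N`; the image `phi n '' S`
of an abacus is the beta-number (first-column hook length) encoding of the boundary
lattice path of the associated partition, with path midpoint (between positions `N-1`
and `N+1`) sitting between indices `2n-1` and `2n`. -/
def phi (n : ℕ) (p : ℤ) : ℤ :=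
  p - Int.fdiv p (2 * (n : ℤ) + 1) - 1

/-- The partition cut out by the boundary lattice path of a balanced flush abacus
(north-step per bead, east-step per gap) is a `2n`-core: in its beta-number encoding
`phi n '' S`, whenever `m` is a beta-number so is `m - 2n` (equivalently, no hook
length is divisible by `2n`). -/
theorem stmt15 (n : ℕ) (hn : 0 < n) (S : Set ℤ) (h : IsBFA n S) :
    ∀ m ∈ phi n '' S, m - 2 * (n : ℤ) ∈ phi n '' S := by
  rintro m ⟨p, hp, rfl⟩
  have hN0 : (0:ℤ) < 2 * (n : ℤ) + 1 := by positivity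
  have hnd : ¬ ((2 * (n : ℤ) + 1) ∣ p) := h.1 p hp
  have hnd' : ¬ ((2 * (n : ℤ) + 1) ∣ (p - (2 * (n : ℤ) + 1))) := fun hd =>
    hnd (by simpa using dvd_add hd (dvd_refl (2 * (n : ℤ) + 1)))
  have hmem : p - (2 * (n : ℤ) + 1) ∈ S := h.2.1 p hp hnd'
  refine ⟨p - (2 * (n : ℤ) + 1), hmem, ?_⟩
  have hdiv : Int.fdiv (p - (2 * (n : ℤ) + 1)) (2 * (n : ℤ) + 1)
      = Int.fdiv p (2 * (n : ℤ) + 1) - 1 := by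
    rw [Int.fdiv_eq_ediv_of_nonneg _ hN0.le, Int.fdiv_eq_ediv_of_nonneg _ hN0.le]
    have : p - (2 * (n : ℤ) + 1) = p + (-1) * (2 * (n : ℤ) + 1) := by ring
    rw [this, Int.add_mul_ediv_right _ _ hN0.ne']; omega
  simp only [phi, hdiv]
  ring
end

section
/- Let λ be the partition associated to a balanced flush abacus via the boundary-path construction (north-step for each bead, east-step for each gap, with the path midpoint placed between positions N-1 and N+1). Then λ is symmetric (self-conjugate): the length of the i-th row equals the length of the i-th column for all i. -/
/-- Auxiliary: euclidean division of `d*q + s` by `d` when `0 ≤ s < d`. -/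
lemma bfa_ediv_helper {d : ℤ} (hd : 0 < d) (q s : ℤ) (h0 : 0 ≤ s) (h1 : s < d) :
    (d * q + s) / d = q := by
  rw [add_comm, Int.add_mul_ediv_left s q hd.ne', Int.ediv_eq_zero_of_lt h0 h1, zero_add]

lemma bfa_emod_helper {d : ℤ} (_hd : 0 < d) (q s : ℤ) (h0 : 0 ≤ s) (h1 : s < d) :
    (d * q + s) % d = s := by
  rw [add_comm, Int.add_mul_emod_self_left, Int.emod_eq_of_lt h0 h1]

lemma bfa_chain {n : ℕ} {S : Set ℤ} (h : IsBFA n S) {m : ℤ} (hm : m ∈ S) :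
    ∀ k : ℕ, m - (k : ℤ) * (2 * (n : ℤ) + 1) ∈ S := by
  intro k
  induction k with
  | zero => simpa using hm
  | succ k ih =>
    have hnd : ¬ (2 * (n : ℤ) + 1) ∣ (m - (k : ℤ) * (2 * (n : ℤ) + 1) - (2 * (n : ℤ) + 1)) := by
      rintro ⟨c, hc⟩
      exact h.1 m hm ⟨c + k + 1, by linarith⟩
    have h2 := h.2.1 _ ih hnd
    have he : m - ((k : ℕ) + 1 : ℤ) * (2 * (n : ℤ) + 1)
        = m - (k : ℤ) * (2 * (n : ℤ) + 1) - (2 * (n : ℤ) + 1) := by ring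
    rw [show (((k + 1 : ℕ)) : ℤ) = ((k : ℤ) + 1) by push_cast; ring, he]
    exact h2

lemma bfa_mem_of_le {n : ℕ} {S : Set ℤ} (h : IsBFA n S) {m p : ℤ} (hm : m ∈ S)
    (hmod : p % (2 * (n : ℤ) + 1) = m % (2 * (n : ℤ) + 1)) (hle : p ≤ m) : p ∈ S := by
  have hNpos : (0 : ℤ) < 2 * (n : ℤ) + 1 := by positivity
  have hdvd : (2 * (n : ℤ) + 1) ∣ (m - p) := Int.ModEq.dvd hmod
  obtain ⟨c, hc⟩ := hdvd
  have hc0 : 0 ≤ c := by nlinarith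
  lift c to ℕ using hc0
  have hpe : p = m - (c : ℤ) * (2 * (n : ℤ) + 1) := by linarith
  rw [hpe]
  exact bfa_chain h hm c

lemma bfa_mem_iff_le {n : ℕ} {S : Set ℤ} (h : IsBFA n S) {p m : ℤ}
    (hg : IsGreatest {q | q ∈ S ∧ q % (2 * (n : ℤ) + 1) = p % (2 * (n : ℤ) + 1)} m) :
    p ∈ S ↔ p ≤ m := by
  constructor
  · intro hp; exact hg.2 ⟨hp, rfl⟩
  · intro hle; exact bfa_mem_of_le h hg.1.1 hg.1.2.symm hle

/-- Key symmetry: `p ∈ S ↔ 2N - p ∉ S`. -/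
lemma bfa_key {n : ℕ} {S : Set ℤ} (h : IsBFA n S) {p : ℤ}
    (hp : ¬ (2 * (n : ℤ) + 1) ∣ p) :
    p ∈ S ↔ 2 * (2 * (n : ℤ) + 1) - p ∉ S := by
  have hNpos : (0 : ℤ) < 2 * (n : ℤ) + 1 := by positivity
  set i : ℤ := p % (2 * (n : ℤ) + 1) with hi
  have hi0 : 0 ≤ i := Int.emod_nonneg p hNpos.ne'
  have hiN : i < 2 * (n : ℤ) + 1 := Int.emod_lt_of_pos p hNpos
  have hine : i ≠ 0 := fun h0 => hp (Int.dvd_of_emod_eq_zero h0)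
  have hi1 : 1 ≤ i := by omega
  have hi2 : i ≤ 2 * (n : ℤ) := by omega
  obtain ⟨m, hm⟩ := h.2.2.1 i hi1 hi2
  obtain ⟨m', hm'⟩ := h.2.2.1 (2 * (n : ℤ) + 1 - i) (by omega) (by omega)
  have hsum : m + m' = 2 * (n : ℤ) + 1 := h.2.2.2 i hi1 hi2 m m' hm hm'
  have e1 : p ∈ S ↔ p ≤ m := bfa_mem_iff_le h hm
  have hmod2 : (2 * (2 * (n : ℤ) + 1) - p) % (2 * (n : ℤ) + 1) = 2 * (n : ℤ) + 1 - i := by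
    have heq : 2 * (2 * (n : ℤ) + 1) - p
        = (2 * (n : ℤ) + 1 - i) + (2 * (n : ℤ) + 1) * (1 - p / (2 * (n : ℤ) + 1)) := by
      have h0 := Int.mul_ediv_add_emod p (2 * (n : ℤ) + 1)
      rw [← hi] at h0
      linarith
    rw [heq, Int.add_mul_emod_self_left, Int.emod_eq_of_lt (by omega) (by omega)]
  have e2 : 2 * (2 * (n : ℤ) + 1) - p ∈ S ↔ 2 * (2 * (n : ℤ) + 1) - p ≤ m' :=
    bfa_mem_iff_le h (p := 2 * (2 * (n : ℤ) + 1) - p) (m := m') (by rwa [hmod2])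
  have hmmod : m % (2 * (n : ℤ) + 1) = i := hm.1.2
  have hdvd : (2 * (n : ℤ) + 1) ∣ (p - m) := Int.ModEq.dvd (show m % (2 * (n : ℤ) + 1) = p % (2 * (n : ℤ) + 1) from hmmod.trans hi)
  rw [e1, e2]
  constructor
  · intro hle hcon
    linarith
  · intro hn2
    have h3 : m' < 2 * (2 * (n : ℤ) + 1) - p := lt_of_not_ge hn2
    obtain ⟨c, hc⟩ := hdvd
    have h4 : (2 * (n : ℤ) + 1) * c < (2 * (n : ℤ) + 1) * 1 := by linarith
    have hc1 : c < 1 := lt_of_mul_lt_mul_left h4 hNpos.le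
    have hc0 : c ≤ 0 := by omega
    have : (2 * (n : ℤ) + 1) * c ≤ 0 := mul_nonpos_of_nonneg_of_nonpos hNpos.le hc0
    linarith

/-- Inverse of `phi`. -/
def bfa_inv (n : ℕ) (m : ℤ) : ℤ := m + m / (2 * (n : ℤ)) + 1

lemma bfa_phi_eq (n : ℕ) (p : ℤ) : phi n p = p - p / (2 * (n : ℤ) + 1) - 1 := by
  unfold phi
  rw [Int.fdiv_eq_ediv_of_nonneg p (by positivity)]

lemma bfa_inv_spec {n : ℕ} (hn : 0 < n) (m : ℤ) :
    ¬ (2 * (n : ℤ) + 1) ∣ bfa_inv n m ∧ phi n (bfa_inv n m) = m := by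
  have hNpos : (0 : ℤ) < 2 * (n : ℤ) + 1 := by positivity
  have h2n : (0 : ℤ) < 2 * (n : ℤ) := by positivity
  set q : ℤ := m / (2 * (n : ℤ)) with hq
  set s : ℤ := m % (2 * (n : ℤ)) with hs
  have hms : 2 * (n : ℤ) * q + s = m := Int.mul_ediv_add_emod m (2 * (n : ℤ))
  have hs0 : 0 ≤ s := Int.emod_nonneg m h2n.ne'
  have hs1 : s < 2 * (n : ℤ) := Int.emod_lt_of_pos m h2n
  have hinv : bfa_inv n m = (2 * (n : ℤ) + 1) * q + (s + 1) := by
    unfold bfa_inv; rw [← hq]; linarith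
  have hmod : bfa_inv n m % (2 * (n : ℤ) + 1) = s + 1 := by
    rw [hinv]; exact bfa_emod_helper hNpos q (s + 1) (by omega) (by omega)
  have hdiv : bfa_inv n m / (2 * (n : ℤ) + 1) = q := by
    rw [hinv]; exact bfa_ediv_helper hNpos q (s + 1) (by omega) (by omega)
  constructor
  · intro hd
    have h0 := Int.emod_eq_zero_of_dvd hd
    omega
  · rw [bfa_phi_eq, hdiv, hinv]; linarith

lemma bfa_inv_phi {n : ℕ} (hn : 0 < n) {p : ℤ} (hp : ¬ (2 * (n : ℤ) + 1) ∣ p) :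
    bfa_inv n (phi n p) = p := by
  have hNpos : (0 : ℤ) < 2 * (n : ℤ) + 1 := by positivity
  have h2n : (0 : ℤ) < 2 * (n : ℤ) := by positivity
  set q : ℤ := p / (2 * (n : ℤ) + 1) with hq
  set r : ℤ := p % (2 * (n : ℤ) + 1) with hr
  have hpr : (2 * (n : ℤ) + 1) * q + r = p := Int.mul_ediv_add_emod p (2 * (n : ℤ) + 1)
  have hr0 : 0 ≤ r := Int.emod_nonneg p hNpos.ne'
  have hr1 : r < 2 * (n : ℤ) + 1 := Int.emod_lt_of_pos p hNpos
  have hrne : r ≠ 0 := fun h0 => hp (Int.dvd_of_emod_eq_zero h0)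
  have hphi : phi n p = 2 * (n : ℤ) * q + (r - 1) := by
    rw [bfa_phi_eq, ← hq]; linarith
  have hdiv : phi n p / (2 * (n : ℤ)) = q := by
    rw [hphi]; exact bfa_ediv_helper h2n q (r - 1) (by omega) (by omega)
  unfold bfa_inv
  rw [hdiv, hphi]
  linarith


/-- The partition associated to a balanced flush abacus is symmetric (self-conjugate):
its boundary lattice path, encoded by the beta-numbers `phi n '' S` with midpoint
between indices `2n-1` and `2n`, is invariant under the conjugation reflection
`m ↦ 4n - 1 - m` exchanging north- and east-steps. -/
theorem stmt16 (n : ℕ) (hn : 0 < n) (S : Set ℤ) (h : IsBFA n S) :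
    ∀ m : ℤ, m ∈ phi n '' S ↔ (4 * (n : ℤ) - 1 - m) ∉ phi n '' S := by
  have key : ∀ m : ℤ, m ∈ phi n '' S ↔ bfa_inv n m ∈ S := by
    intro m
    constructor
    · rintro ⟨p, hpS, rfl⟩
      rw [bfa_inv_phi hn (h.1 p hpS)]
      exact hpS
    · intro hmem
      exact ⟨bfa_inv n m, hmem, (bfa_inv_spec hn m).2⟩
  intro m
  rw [key m, key (4 * (n : ℤ) - 1 - m)]
  have hrefl : bfa_inv n (4 * (n : ℤ) - 1 - m) = 2 * (2 * (n : ℤ) + 1) - bfa_inv n m := by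
    have h2n : (0 : ℤ) < 2 * (n : ℤ) := by positivity
    set q : ℤ := m / (2 * (n : ℤ)) with hq
    set s : ℤ := m % (2 * (n : ℤ)) with hs
    have hms : 2 * (n : ℤ) * q + s = m := Int.mul_ediv_add_emod m (2 * (n : ℤ))
    have hs0 : 0 ≤ s := Int.emod_nonneg m h2n.ne'
    have hs1 : s < 2 * (n : ℤ) := Int.emod_lt_of_pos m h2n
    have he : 4 * (n : ℤ) - 1 - m = 2 * (n : ℤ) * (1 - q) + (2 * (n : ℤ) - 1 - s) := by
      linarith [mul_one_sub (2 * (n : ℤ)) q]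
    have hdiv : (4 * (n : ℤ) - 1 - m) / (2 * (n : ℤ)) = 1 - q := by
      rw [he]; exact bfa_ediv_helper h2n (1 - q) _ (by omega) (by omega)
    unfold bfa_inv
    rw [hdiv, ← hq]
    linarith
  rw [hrefl]
  exact bfa_key h (bfa_inv_spec hn m).1
end

section
/- Under the bijection between balanced flush abaci and symmetric (2n)-cores, the number of gaps preceding position N in reading order equals the number of boxes on the main diagonal of the corresponding partition λ. Consequently, the abacus is even (an even number of gaps precede N) if and only if λ has an even number of diagonal boxes. -/
/-- The number of gaps preceding position `N` in reading order equals the number of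
boxes on the main diagonal of the associated partition (north-steps at or after the
path midpoint, i.e. beta-numbers `≥ 2n`); hence the abacus is even iff the partition
has an even number of diagonal boxes. -/
theorem stmt18 (n : ℕ) (hn : 0 < n) (S : Set ℤ) (h : IsBFA n S) :
    {g : ℤ | g ∉ S ∧ ¬ ((2 * (n : ℤ) + 1) ∣ g) ∧ g < 2 * (n : ℤ) + 1 ∧
      ∃ b ∈ S, g < b}.Finite ∧
    {m : ℤ | m ∈ phi n '' S ∧ 2 * (n : ℤ) ≤ m}.Finite ∧
    {g : ℤ | g ∉ S ∧ ¬ ((2 * (n : ℤ) + 1) ∣ g) ∧ g < 2 * (n : ℤ) + 1 ∧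
      ∃ b ∈ S, g < b}.ncard =
      {m : ℤ | m ∈ phi n '' S ∧ 2 * (n : ℤ) ≤ m}.ncard ∧
    (Even ({g : ℤ | g ∉ S ∧ ¬ ((2 * (n : ℤ) + 1) ∣ g) ∧ g < 2 * (n : ℤ) + 1 ∧
        ∃ b ∈ S, g < b}.ncard) ↔
      Even ({m : ℤ | m ∈ phi n '' S ∧ 2 * (n : ℤ) ≤ m}.ncard)) := by
  obtain ⟨hS0, hflush, hmax, hbal⟩ := h
  set N : ℤ := 2 * (n : ℤ) + 1 with hNdef
  have hNpos : (0:ℤ) < N := by omega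
  -- down-closure along a runner
  have down : ∀ (k : ℕ) (m : ℤ), m ∈ S → m - (k : ℤ) * N ∈ S := by
    intro k
    induction k with
    | zero => intro m hm; simpa using hm
    | succ k ih =>
      intro m hm
      have h1 := ih m hm
      have h2 : ¬ N ∣ (m - (k : ℤ) * N - N) := by
        intro hd
        refine hS0 _ h1 ?_
        have hb : m - (k : ℤ) * N = (m - (k : ℤ) * N - N) + N := by ring
        rw [hb]
        exact dvd_add hd dvd_rfl
      have h3 := hflush _ h1 h2
      have heq : m - ((k:ℕ)+1 : ℕ) * N = m - (k : ℤ) * N - N := by push_cast; ring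
      rw [heq]; exact h3
  have mem_of_le : ∀ m ∈ S, ∀ p : ℤ, p % N = m % N → p ≤ m → p ∈ S := by
    intro m hm p hpr hple
    have hdvd : N ∣ m - p := Int.ModEq.dvd hpr
    obtain ⟨t, ht⟩ := hdvd
    have ht0 : 0 ≤ t := by
      by_contra hneg
      push_neg at hneg
      nlinarith
    have hp : p = m - (t.toNat : ℤ) * N := by
      rw [Int.toNat_of_nonneg ht0]; linarith [ht]
    rw [hp]; exact down t.toNat m hm
  -- choose greatest elements
  have hmaxd : ∀ i : ℤ, ∃ m, 1 ≤ i → i ≤ 2 * (n : ℤ) →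
      IsGreatest {p | p ∈ S ∧ p % N = i} m := by
    intro i
    by_cases h1 : 1 ≤ i
    · by_cases h2 : i ≤ 2 * (n : ℤ)
      · obtain ⟨m, hm⟩ := hmax i h1 h2; exact ⟨m, fun _ _ => hm⟩
      · exact ⟨0, fun _ h' => absurd h' h2⟩
    · exact ⟨0, fun h' _ => absurd h' h1⟩
  choose mx hmx using hmaxd
  have hres : ∀ p ∈ S, 1 ≤ p % N ∧ p % N ≤ 2 * (n : ℤ) := by
    intro p hp
    have h0 : 0 ≤ p % N := Int.emod_nonneg p (by omega)
    have h1 : p % N < N := Int.emod_lt_of_pos p hNpos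
    have h2 : p % N ≠ 0 := fun hh => hS0 p hp (Int.dvd_of_emod_eq_zero hh)
    omega
  have hub : ∀ p ∈ S, p ≤ mx (p % N) := by
    intro p hp
    exact (hmx _ (hres p hp).1 (hres p hp).2).2 ⟨hp, rfl⟩
  have hbal' : ∀ i : ℤ, 1 ≤ i → i ≤ 2 * (n : ℤ) → mx i + mx (N - i) = N := by
    intro i h1 h2
    exact hbal i h1 h2 _ _ (hmx i h1 h2) (hmx (N - i) (by omega) (by omega))
  -- modular helper
  have hmod2 : ∀ x i : ℤ, x % N = i → 1 ≤ i → i < N → (2 * N - x) % N = N - i := by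
    intro x i hx h1 h2
    have hx' : x = N * (x / N) + i := by rw [← hx]; exact (Int.mul_ediv_add_emod x N).symm
    have he : 2 * N - x = (N - i) + N * (1 - x / N) := by linear_combination -hx'
    rw [he, Int.add_mul_emod_self_left]
    exact Int.emod_eq_of_lt (by omega) (by omega)
  set G := {g : ℤ | g ∉ S ∧ ¬ (N ∣ g) ∧ g < N ∧ ∃ b ∈ S, g < b} with hGdef
  set B := {p : ℤ | p ∈ S ∧ N < p} with hBdef
  -- maps between gaps and high beads
  have hBtoG : ∀ b ∈ B, 2 * N - b ∈ G := by
    intro b hb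
    obtain ⟨hbS, hbN⟩ : b ∈ S ∧ N < b := hb
    obtain ⟨hi1, hi2⟩ := hres b hbS
    refine ⟨?_, ?_, by omega, b, hbS, by omega⟩
    · intro hgS
      have hub1 : b ≤ mx (b % N) := hub b hbS
      have hgr : (2 * N - b) % N = N - b % N := hmod2 b (b % N) rfl hi1 (by omega)
      have hub2 : 2 * N - b ≤ mx ((2 * N - b) % N) := hub _ hgS
      rw [hgr] at hub2
      have hs := hbal' (b % N) hi1 hi2
      omega
    · intro hd
      refine hS0 b hbS ?_
      have hb' : b = 2 * N - (2 * N - b) := by ring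
      rw [hb']
      exact dvd_sub (Dvd.intro 2 (by ring)) hd
  have hGtoB : ∀ g ∈ G, 2 * N - g ∈ B := by
    intro g hg
    obtain ⟨hgS, hgnd, hglt, -⟩ : g ∉ S ∧ ¬ (N ∣ g) ∧ g < N ∧ ∃ b ∈ S, g < b := hg
    have hi0 : 0 ≤ g % N := Int.emod_nonneg g (by omega)
    have hiN : g % N < N := Int.emod_lt_of_pos g hNpos
    have hine : g % N ≠ 0 := fun hh => hgnd (Int.dvd_of_emod_eq_zero hh)
    have hi1 : 1 ≤ g % N := by omega
    have hi2 : g % N ≤ 2 * (n : ℤ) := by omega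
    have hmxS : mx (g % N) ∈ S := (hmx _ hi1 hi2).1.1
    have hmxr : mx (g % N) % N = g % N := (hmx _ hi1 hi2).1.2
    have hgm : mx (g % N) < g := by
      by_contra hle
      push_neg at hle
      exact hgS (mem_of_le (mx (g % N)) hmxS g hmxr.symm hle)
    have hdvd : N ∣ g - mx (g % N) := Int.ModEq.dvd hmxr
    have hge : N ≤ g - mx (g % N) := Int.le_of_dvd (by omega) hdvd
    have hs := hbal' (g % N) hi1 hi2
    have hbr : (2 * N - g) % N = N - g % N := hmod2 g (g % N) rfl hi1 (by omega)
    have hmxS' : mx (N - g % N) ∈ S := (hmx (N - g % N) (by omega) (by omega)).1.1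
    have hmxr' : mx (N - g % N) % N = N - g % N := (hmx (N - g % N) (by omega) (by omega)).1.2
    refine ⟨mem_of_le (mx (N - g % N)) hmxS' (2 * N - g) ?_ ?_, by omega⟩
    · rw [hbr, hmxr']
    · omega
  have hfinv : ∀ x : ℤ, 2 * N - (2 * N - x) = x := by intro x; ring
  have hGeq : G = (fun x : ℤ => 2 * N - x) '' B := by
    ext g
    constructor
    · intro hg; exact ⟨2 * N - g, hGtoB g hg, hfinv g⟩
    · rintro ⟨b, hb, rfl⟩; exact hBtoG b hb
  -- B is finite
  have hne : ((Finset.Icc (1:ℤ) (2 * (n:ℤ))).image mx).Nonempty :=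
    Finset.Nonempty.image (Finset.nonempty_Icc.2 (by omega)) mx
  set M : ℤ := ((Finset.Icc (1:ℤ) (2 * (n:ℤ))).image mx).max' hne with hMdef
  have hM : ∀ p ∈ S, p ≤ M := by
    intro p hp
    refine le_trans (hub p hp) (Finset.le_max' _ _ ?_)
    exact Finset.mem_image.2 ⟨p % N, Finset.mem_Icc.2 ⟨(hres p hp).1, (hres p hp).2⟩, rfl⟩
  have hBfin : B.Finite :=
    Set.Finite.subset (Set.finite_Ioc N M) (fun p hp => ⟨hp.2, hM p hp.1⟩)
  have hGfin : G.Finite := by rw [hGeq]; exact hBfin.image _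
  -- phi facts
  have hphi : ∀ p : ℤ, phi n p = p - p / N - 1 := by
    intro p
    unfold phi
    rw [Int.fdiv_eq_ediv_of_nonneg p (by omega : (0:ℤ) ≤ 2 * (n:ℤ) + 1)]
  have hphi_mem : ∀ p ∈ S, (N - 1 ≤ phi n p ↔ N < p) := by
    intro p hp
    have h0 : 1 ≤ p % N := (hres p hp).1
    have hlt : p % N < N := Int.emod_lt_of_pos p hNpos
    have hdm : N * (p / N) + p % N = p := Int.mul_ediv_add_emod p N
    rw [hphi p]
    constructor
    · intro hge
      by_contra hle
      push_neg at hle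
      rcases le_or_gt (p / N) 0 with ha | ha
      · nlinarith [mul_nonpos_of_nonpos_of_nonneg ha (by omega : (0:ℤ) ≤ N - 1)]
      · have ha' : 1 ≤ p / N := ha
        nlinarith [mul_nonneg (by linarith : (0:ℤ) ≤ p / N - 1) (by omega : (0:ℤ) ≤ N)]
    · intro hlt'
      have ha : 1 ≤ p / N := by
        by_contra h'
        push_neg at h'
        have ha0 : p / N ≤ 0 := by linarith
        nlinarith [mul_nonpos_of_nonpos_of_nonneg ha0 (by omega : (0:ℤ) ≤ N)]
      nlinarith [mul_nonneg (by linarith : (0:ℤ) ≤ p / N - 1) (by omega : (0:ℤ) ≤ N - 1)]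
  have hinj : Set.InjOn (phi n) S := by
    intro p hp q hq hpq
    rw [hphi p, hphi q] at hpq
    have h1 : N * (p / N) + p % N = p := Int.mul_ediv_add_emod p N
    have h2 : N * (q / N) + q % N = q := Int.mul_ediv_add_emod q N
    have hp1 : 1 ≤ p % N := (hres p hp).1
    have hq1 : 1 ≤ q % N := (hres q hq).1
    have hp2 : p % N < N := Int.emod_lt_of_pos p hNpos
    have hq2 : q % N < N := Int.emod_lt_of_pos q hNpos
    have key : p / N = q / N := by
      rcases lt_trichotomy (p / N) (q / N) with hlt | heq | hgt
      · have h3 : p / N + 1 ≤ q / N := Int.add_one_le_iff.mpr hlt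
        nlinarith [mul_nonneg (by linarith : (0:ℤ) ≤ q / N - p / N - 1)
          (by omega : (0:ℤ) ≤ N - 1)]
      · exact heq
      · have h3 : q / N + 1 ≤ p / N := Int.add_one_le_iff.mpr hgt
        nlinarith [mul_nonneg (by linarith : (0:ℤ) ≤ p / N - q / N - 1)
          (by omega : (0:ℤ) ≤ N - 1)]
    linarith
  have hMeq : {m : ℤ | m ∈ phi n '' S ∧ 2 * (n : ℤ) ≤ m} = phi n '' B := by
    ext m
    simp only [Set.mem_setOf_eq, Set.mem_image]
    constructor
    · rintro ⟨⟨p, hp, rfl⟩, hge⟩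
      exact ⟨p, ⟨hp, (hphi_mem p hp).1 (by omega)⟩, rfl⟩
    · rintro ⟨p, ⟨hp, hpN⟩, rfl⟩
      refine ⟨⟨p, hp, rfl⟩, ?_⟩
      have := (hphi_mem p hp).2 hpN
      omega
  have hMfin : {m : ℤ | m ∈ phi n '' S ∧ 2 * (n : ℤ) ≤ m}.Finite := by
    rw [hMeq]; exact hBfin.image _
  have hfinj : Function.Injective (fun x : ℤ => 2 * N - x) := by
    intro a b hab
    simpa using hab
  have hcard1 : G.ncard = B.ncard := by
    rw [hGeq, Set.ncard_image_of_injective _ hfinj]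
  have hcard2 : {m : ℤ | m ∈ phi n '' S ∧ 2 * (n : ℤ) ≤ m}.ncard = B.ncard := by
    rw [hMeq, Set.ncard_image_of_injOn (hinj.mono (fun p hp => hp.1))]
  have hcards : G.ncard = {m : ℤ | m ∈ phi n '' S ∧ 2 * (n : ℤ) ≤ m}.ncard := by
    rw [hcard1, hcard2]
  exact ⟨hGfin, hMfin, hcards, by rw [hcards]⟩
end
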